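/- (Kozlov's theorem, part (iii).) Consider a discrete-time random walk in a time-dependent random environment with law ℙ on Ω^ℕ stationary under all space-time shifts. Assume {θ_{1,z} : z ∈ U} is an ergodic family of transformations for ℙ. Then there is at most one invariant probability measure for the environmental process which is absolutely continuous with respect to ℙ: if ν and ν' are both invariant and both absolutely continuous with respect to ℙ, then ν = ν'. -/

import Mathlib

open MeasureTheory

namespace KozlovPartThree

/-- Points of the lattice `ℤ^d`. -/
abbrev Zd (d : ℕ) := Fin d → ℤ

/-- The space `Ω^ℕ` of time-dependent environments. -/
abbrev EnvSpace (d : ℕ) := ℕ → Zd d → Zd d → ℝ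

/-- The space-time shift `θ_{n,x}`. -/
def thetaShift (d : ℕ) (n : ℕ) (x : Zd d) (ω : EnvSpace d) : EnvSpace d :=
  fun m y e => ω (n + m) (y + x) e

/-- `ω` is an honest environment with jump range `U`. -/
def IsEnv (d : ℕ) (U : Finset (Zd d)) (ω : EnvSpace d) : Prop :=
  ∀ n x, (∀ e ∈ U, 0 < ω n x e) ∧ (∀ e, e ∉ U → ω n x e = 0) ∧ (∑ e ∈ U, ω n x e = 1)

/-- The transition operator of the environmental process. -/
def Rop (d : ℕ) (U : Finset (Zd d)) (g : EnvSpace d → ℝ) (ω : EnvSpace d) : ℝ :=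
  ∑ e ∈ U, ω 0 0 e * g (thetaShift d 1 e ω)

/-- `ν` is an invariant distribution for the environmental process. -/
def IsInvariantMeasure (d : ℕ) (U : Finset (Zd d)) (ν : Measure (EnvSpace d)) : Prop :=
  ∀ g : EnvSpace d → ℝ, Measurable g → (∃ C, ∀ ω, |g ω| ≤ C) →
    ∫ ω, Rop d U g ω ∂ν = ∫ ω, g ω ∂ν

/-!
An invariant measure `ν ≪ ℙ` is a fixed point of the adjoint `R*` of `R` acting on measures.
Since `R*` is additive, monotone and mass preserving, `ν ⊓ ν'`, `ν - ν ⊓ ν'` and `ν' - ν ⊓ ν'`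
are fixed points as well. If `σ ≪ ℙ` is a nonzero fixed point, then, the jump weights being
positive, the support of `dσ/dℙ` is `ℙ`-a.s. invariant under every `θ_{1,e}`, `e ∈ U`; by
ergodicity it has full measure, so `ℙ ≪ σ`. If `ν ≠ ν'`, the two mutually singular fixed
points `ν - ν ⊓ ν'` and `ν' - ν ⊓ ν'` would both be nonzero and hence equivalent to `ℙ`.
-/

open Set Filter Measure

section InvariantSets

theorem preimage_limsup_preimage_iterate {α : Type*} {f g : α → α} (hfg : Function.Commute f g)
    {t : Set α} (ht : g ⁻¹' t = t) :
    g ⁻¹' limsup (fun n => f^[n] ⁻¹' t) atTop = limsup (fun n => f^[n] ⁻¹' t) atTop := by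
  have hcomm_pre (n : ℕ) : g ⁻¹' (f^[n] ⁻¹' t) = f^[n] ⁻¹' t := by
    rw [← preimage_comp, (hfg.iterate_left n).comp_eq, preimage_comp, ht]
  simp only [limsup_eq_iInf_iSup_of_nat, iInf_eq_iInter, iSup_eq_iUnion, preimage_iInter,
    preimage_iUnion, hcomm_pre]

variable {α : Type*} [MeasurableSpace α] {μ : Measure α}

theorem exists_preimage_eq_of_preimage_ae_of_commute {ι : Type*} (s : Finset ι) {f : ι → α → α}
    (hf : ∀ i ∈ s, QuasiMeasurePreserving (f i) μ μ)
    (hcomm : ∀ i ∈ s, ∀ j ∈ s, Function.Commute (f i) (f j))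
    {t : Set α} (ht : MeasurableSet t) (ht' : ∀ i ∈ s, f i ⁻¹' t =ᵐ[μ] t) :
    ∃ t' : Set α, MeasurableSet t' ∧ t' =ᵐ[μ] t ∧ ∀ i ∈ s, f i ⁻¹' t' = t' := by
  classical
  induction s using Finset.induction_on with
  | empty => exact ⟨t, ht, .rfl, by simp⟩
  | @insert a s ha ih =>
    simp only [Finset.mem_insert, forall_eq_or_imp] at hf hcomm ht'
    obtain ⟨u, hu, hut, hu_inv⟩ := ih hf.2 (fun i hi j hj => hcomm.2 i hi |>.2 j hj) ht'.2
    have hau : f a ⁻¹' u =ᵐ[μ] u := (hf.1.preimage_ae_eq hut).trans (ht'.1.trans hut.symm)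
    refine ⟨limsup (fun n => (f a)^[n] ⁻¹' u) atTop,
      .measurableSet_limsup fun n => hf.1.measurable.iterate n hu,
      (limsup_ae_eq_of_forall_ae_eq _ fun n => hf.1.preimage_iterate_ae_eq n hau).trans hut, ?_⟩
    simp only [Finset.mem_insert, forall_eq_or_imp]
    refine ⟨?_, fun i hi => preimage_limsup_preimage_iterate (hcomm.2 i hi).1.symm (hu_inv i hi)⟩
    simp only [Set.preimage_iterate_eq]
    exact CompleteLatticeHom.apply_limsup_iterate (CompleteLatticeHom.setPreimage (f a)) u

theorem measure_eq_zero_or_one_of_ae_le_preimage [IsFiniteMeasure μ] {ι : Type*} (s : Finset ι)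
    {f : ι → α → α} (hf : ∀ i ∈ s, MeasurePreserving (f i) μ μ)
    (hcomm : ∀ i ∈ s, ∀ j ∈ s, Function.Commute (f i) (f j))
    (herg : ∀ A : Set α, MeasurableSet A → (∀ i ∈ s, f i ⁻¹' A = A) → μ A = 0 ∨ μ A = 1)
    {B : Set α} (hB : MeasurableSet B) (hsub : ∀ i ∈ s, B ≤ᵐ[μ] f i ⁻¹' B) :
    μ B = 0 ∨ μ B = 1 := by
  have hinv : ∀ i ∈ s, f i ⁻¹' B =ᵐ[μ] B := fun i hi =>
    (ae_eq_of_ae_subset_of_measure_ge (hsub i hi)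
      ((hf i hi).measure_preimage hB.nullMeasurableSet).le hB.nullMeasurableSet
      (measure_ne_top _ _)).symm
  obtain ⟨B', hB', hB'B, hB'inv⟩ := exists_preimage_eq_of_preimage_ae_of_commute s
    (fun i hi => (hf i hi).quasiMeasurePreserving) hcomm hB hinv
  rw [← measure_congr hB'B]
  exact herg B' hB' hB'inv

end InvariantSets

section FiniteMeasures

variable {α : Type*} [MeasurableSpace α]

theorem measure_eq_of_le_of_measure_univ_eq {μ ν : Measure α} [IsFiniteMeasure ν] (h : μ ≤ ν)
    (huniv : μ univ = ν univ) : μ = ν := by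
  have : IsFiniteMeasure μ := isFiniteMeasure_of_le ν h
  have hsub : ν - μ = 0 := by
    rw [← measure_univ_eq_zero, sub_apply .univ h, huniv, tsub_self]
  rw [← sub_add_cancel_of_le h, hsub, zero_add]

instance isFiniteMeasure_inf (μ ν : Measure α) [IsFiniteMeasure μ] : IsFiniteMeasure (μ ⊓ ν) :=
  isFiniteMeasure_of_le μ inf_le_left

theorem disjoint_sub_inf (μ ν : Measure α) [IsFiniteMeasure μ] :
    Disjoint (μ - μ ⊓ ν) (ν - μ ⊓ ν) := by
  intro ξ hξμ hξν
  have hle : ξ + μ ⊓ ν ≤ μ ⊓ ν := le_inf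
    ((add_le_add hξμ le_rfl).trans_eq (sub_add_cancel_of_le inf_le_left))
    ((add_le_add hξν le_rfl).trans_eq (sub_add_cancel_of_le inf_le_right))
  calc ξ = ξ + μ ⊓ ν - μ ⊓ ν := Measure.add_sub_cancel.symm
    _ ≤ ⊥ := sub_le_of_le_add (hle.trans_eq (zero_add _).symm)

theorem eq_of_sub_inf_eq_zero {μ ν : Measure α} [IsProbabilityMeasure μ] [IsProbabilityMeasure ν]
    (h : μ - μ ⊓ ν = 0) : μ = ν := by
  have hle : μ ≤ ν := by
    rw [← sub_add_cancel_of_le (inf_le_left : μ ⊓ ν ≤ μ), h, zero_add]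
    exact inf_le_right
  exact measure_eq_of_le_of_measure_univ_eq hle (by simp)

end FiniteMeasures

section Environment

variable {d : ℕ} {U : Finset (Zd d)}

theorem measurable_thetaShift (n : ℕ) (x : Zd d) : Measurable (thetaShift d n x) := by
  unfold thetaShift; fun_prop

theorem commute_thetaShift (n m : ℕ) (x y : Zd d) :
    Function.Commute (thetaShift d n x) (thetaShift d m y) := by
  intro ω
  funext k z e
  simp only [thetaShift]
  rw [add_left_comm n m k, add_right_comm z x y]

noncomputable def jumpWeight (e : Zd d) (ω : EnvSpace d) : ENNReal := ENNReal.ofReal (ω 0 0 e)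

theorem measurable_jumpWeight (e : Zd d) : Measurable (jumpWeight e) := by
  unfold jumpWeight; fun_prop

/-- The adjoint of `Rop` acting on measures: `∫ Rop g ∂ρ = ∫ g ∂(Rstar U ρ)`. -/
noncomputable def Rstar (U : Finset (Zd d)) (ρ : Measure (EnvSpace d)) : Measure (EnvSpace d) :=
  ∑ e ∈ U, (ρ.withDensity (jumpWeight e)).map (thetaShift d 1 e)

theorem Rstar_apply (ρ : Measure (EnvSpace d)) {A : Set (EnvSpace d)} (hA : MeasurableSet A) :
    Rstar U ρ A = ∫⁻ ω, ∑ e ∈ U, (thetaShift d 1 e ⁻¹' A).indicator (jumpWeight e) ω ∂ρ := by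
  rw [lintegral_finsetSum _ fun e _ =>
      (measurable_jumpWeight e).indicator (measurable_thetaShift 1 e hA),
    Rstar, Measure.finsetSum_apply]
  refine Finset.sum_congr rfl fun e _ => ?_
  rw [map_apply (measurable_thetaShift 1 e) hA, withDensity_apply _ (measurable_thetaShift 1 e hA),
    lintegral_indicator (measurable_thetaShift 1 e hA)]

theorem Rstar_mono {ρ ρ' : Measure (EnvSpace d)} (h : ρ ≤ ρ') : Rstar U ρ ≤ Rstar U ρ' :=
  Measure.le_iff.2 fun A hA => by
    simpa only [Rstar_apply _ hA] using lintegral_mono' h le_rfl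

theorem Rstar_add (ρ ρ' : Measure (EnvSpace d)) : Rstar U (ρ + ρ') = Rstar U ρ + Rstar U ρ' := by
  simp only [Rstar, withDensity_add_measure, Measure.map_add _ _ (measurable_thetaShift 1 _),
    Finset.sum_add_distrib]

theorem sum_jumpWeight_eq_one {ω : EnvSpace d} (hω : IsEnv d U ω) :
    ∑ e ∈ U, jumpWeight e ω = 1 := by
  obtain ⟨hpos, -, hsum⟩ := hω 0 0
  simp only [jumpWeight]
  rw [← ENNReal.ofReal_sum_of_nonneg fun e he => (hpos e he).le, hsum, ENNReal.ofReal_one]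

theorem Rstar_univ {ρ : Measure (EnvSpace d)} (hρ : ∀ᵐ ω ∂ρ, IsEnv d U ω) :
    Rstar U ρ univ = ρ univ := by
  rw [Rstar_apply ρ MeasurableSet.univ, ← lintegral_one]
  refine lintegral_congr_ae (hρ.mono fun ω hω => ?_)
  simpa only [preimage_univ, indicator_univ] using sum_jumpWeight_eq_one hω

theorem ofReal_Rop_indicator {ω : EnvSpace d} (hω : IsEnv d U ω) (A : Set (EnvSpace d)) :
    ENNReal.ofReal (Rop d U (A.indicator 1) ω) =
      ∑ e ∈ U, (thetaShift d 1 e ⁻¹' A).indicator (jumpWeight e) ω := by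
  have hpos : ∀ e ∈ U, 0 ≤ ω 0 0 e := fun e he => ((hω 0 0).1 e he).le
  have hind : ∀ ω, 0 ≤ A.indicator (1 : EnvSpace d → ℝ) ω :=
    indicator_nonneg fun _ _ => zero_le_one
  rw [Rop, ENNReal.ofReal_sum_of_nonneg fun e he => mul_nonneg (hpos e he) (hind _)]
  refine Finset.sum_congr rfl fun e he => ?_
  by_cases h : thetaShift d 1 e ω ∈ A <;> simp [h, jumpWeight]

theorem Rstar_eq_self_of_isInvariantMeasure {ν : Measure (EnvSpace d)} [IsFiniteMeasure ν]
    (hν : ∀ᵐ ω ∂ν, IsEnv d U ω) (hinv : IsInvariantMeasure d U ν) : Rstar U ν = ν := by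
  ext A hA
  have hg : Measurable (A.indicator (1 : EnvSpace d → ℝ)) := measurable_one.indicator hA
  have hRg : Measurable (Rop d U (A.indicator 1)) := by
    unfold Rop thetaShift; fun_prop
  have hRg_nonneg : 0 ≤ᵐ[ν] Rop d U (A.indicator 1) := hν.mono fun ω hω =>
    Finset.sum_nonneg fun e he =>
      mul_nonneg ((hω 0 0).1 e he).le (indicator_nonneg (fun _ _ => zero_le_one) _)
  have heq := hinv _ hg ⟨1, fun ω => by by_cases h : ω ∈ A <;> simp [h]⟩
  rw [integral_eq_lintegral_of_nonneg_ae hRg_nonneg hRg.aestronglyMeasurable,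
    integral_indicator_one hA, lintegral_congr_ae (hν.mono fun ω hω => ofReal_Rop_indicator hω A),
    ← Rstar_apply ν hA] at heq
  have hfin : Rstar U ν A ≠ ⊤ := ne_top_of_le_ne_top
    (by rw [Rstar_univ hν]; exact measure_ne_top ν univ) (measure_mono (subset_univ A))
  exact (ENNReal.toReal_eq_toReal_iff' hfin (measure_ne_top ν A)).1 heq

theorem measure_preimage_thetaShift_eq_zero {σ : Measure (EnvSpace d)}
    (hσ : ∀ᵐ ω ∂σ, IsEnv d U ω) (hfix : Rstar U σ = σ) {A : Set (EnvSpace d)}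
    (hA : MeasurableSet A) (hA0 : σ A = 0) {e : Zd d} (he : e ∈ U) :
    σ (thetaShift d 1 e ⁻¹' A) = 0 := by
  have hpos : ∀ᵐ ω ∂σ, jumpWeight e ω ≠ 0 :=
    hσ.mono fun ω hω => (ENNReal.ofReal_pos.2 ((hω 0 0).1 e he)).ne'
  rw [← hfix, Rstar, Measure.finsetSum_apply, Finset.sum_eq_zero_iff] at hA0
  have h := hA0 e he
  rwa [map_apply (measurable_thetaShift 1 e) hA,
    withDensity_apply_eq_zero' (measurable_jumpWeight e).aemeasurable, inter_comm,
    measure_inter_conull (mem_ae_iff.1 hpos)] at h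

theorem Rstar_inf_eq_self {ν ν' : Measure (EnvSpace d)} [IsFiniteMeasure ν]
    (hν : ∀ᵐ ω ∂ν, IsEnv d U ω) (hfix : Rstar U ν = ν) (hfix' : Rstar U ν' = ν') :
    Rstar U (ν ⊓ ν') = ν ⊓ ν' := by
  refine measure_eq_of_le_of_measure_univ_eq ?_
    (Rstar_univ (absolutelyContinuous_of_le inf_le_left |>.ae_le hν))
  exact le_inf ((Rstar_mono inf_le_left).trans_eq hfix) ((Rstar_mono inf_le_right).trans_eq hfix')

theorem Rstar_sub_eq_self {ν τ : Measure (EnvSpace d)} [IsFiniteMeasure τ] (hτν : τ ≤ ν)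
    (hfix : Rstar U ν = ν) (hτ : Rstar U τ = τ) : Rstar U (ν - τ) = ν - τ :=
  calc Rstar U (ν - τ) = Rstar U (ν - τ) + τ - τ := Measure.add_sub_cancel.symm
    _ = Rstar U (ν - τ + τ) - τ := by rw [Rstar_add, hτ]
    _ = ν - τ := by rw [sub_add_cancel_of_le hτν, hfix]

theorem absolutelyContinuous_of_Rstar_eq_self {P : Measure (EnvSpace d)} [IsProbabilityMeasure P]
    (hsupp : ∀ᵐ ω ∂P, IsEnv d U ω)
    (hpres : ∀ e ∈ U, MeasurePreserving (thetaShift d 1 e) P P)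
    (herg : ∀ A : Set (EnvSpace d), MeasurableSet A →
      (∀ e ∈ U, thetaShift d 1 e ⁻¹' A = A) → P A = 0 ∨ P A = 1)
    {σ : Measure (EnvSpace d)} [SigmaFinite σ] (hσP : σ ≪ P) (hfix : Rstar U σ = σ)
    (hσ : σ ≠ 0) : P ≪ σ := by
  set B := Function.support (σ.rnDeriv P)
  have hB : MeasurableSet B := measurableSet_support (measurable_rnDeriv σ P)
  have hnull (s : Set (EnvSpace d)) : σ s = 0 ↔ P (B ∩ s) = 0 := by
    conv_lhs => rw [← withDensity_rnDeriv_eq σ P hσP]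
    exact withDensity_apply_eq_zero' (measurable_rnDeriv σ P).aemeasurable
  have hsub : ∀ e ∈ U, B ≤ᵐ[P] thetaShift d 1 e ⁻¹' B := fun e he => by
    have hBc : σ Bᶜ = 0 := (hnull _).2 (by simp)
    have := (hnull _).1
      (measure_preimage_thetaShift_eq_zero (hσP.ae_le hsupp) hfix hB.compl hBc he)
    rwa [ae_le_set, sdiff_eq, ← preimage_compl]
  have hPB : P B = 1 := by
    refine (measure_eq_zero_or_one_of_ae_le_preimage U hpres
      (fun e _ e' _ => commute_thetaShift 1 1 e e') herg hB hsub).resolve_left fun hPB => ?_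
    exact hσ (measure_univ_eq_zero.1 ((hnull _).2 (by rwa [inter_univ])))
  refine AbsolutelyContinuous.mk fun s _ hs => ?_
  rw [← measure_inter_conull ((prob_compl_eq_zero_iff hB).2 hPB), inter_comm]
  exact (hnull s).1 hs

end Environment

theorem invariant_measure_unique {d : ℕ} (U : Finset (Zd d))
    (P : Measure (EnvSpace d)) [IsProbabilityMeasure P]
    (hsupp : ∀ᵐ ω ∂P, IsEnv d U ω)
    (hstat : ∀ (n : ℕ) (x : Zd d), P.map (thetaShift d n x) = P)
    (herg : ∀ A : Set (EnvSpace d), MeasurableSet A →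
      (∀ e ∈ U, thetaShift d 1 e ⁻¹' A = A) → P A = 0 ∨ P A = 1)
    (ν ν' : Measure (EnvSpace d)) [IsProbabilityMeasure ν] [IsProbabilityMeasure ν']
    (hinv : IsInvariantMeasure d U ν) (hac : ν ≪ P)
    (hinv' : IsInvariantMeasure d U ν') (hac' : ν' ≪ P) :
    ν = ν' := by
  have hfix := Rstar_eq_self_of_isInvariantMeasure (hac.ae_le hsupp) hinv
  have hfix' := Rstar_eq_self_of_isInvariantMeasure (hac'.ae_le hsupp) hinv'
  have hτ := Rstar_inf_eq_self (hac.ae_le hsupp) hfix hfix'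
  have hpres : ∀ e ∈ U, MeasurePreserving (thetaShift d 1 e) P P := fun e _ =>
    ⟨measurable_thetaShift 1 e, hstat 1 e⟩
  by_contra hne
  have hρ : ν - ν ⊓ ν' ≠ 0 := fun h => hne (eq_of_sub_inf_eq_zero h)
  have hρ' : ν' - ν ⊓ ν' ≠ 0 := fun h => hne (eq_of_sub_inf_eq_zero (inf_comm ν ν' ▸ h)).symm
  have hPρ : P ≪ ν - ν ⊓ ν' := absolutelyContinuous_of_Rstar_eq_self hsupp hpres herg
    ((absolutelyContinuous_of_le sub_le).trans hac) (Rstar_sub_eq_self inf_le_left hfix hτ) hρ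
  have hPρ' : P ≪ ν' - ν ⊓ ν' := absolutelyContinuous_of_Rstar_eq_self hsupp hpres herg
    ((absolutelyContinuous_of_le sub_le).trans hac') (Rstar_sub_eq_self inf_le_right hfix' hτ) hρ'
  have hPP : P ⟂ₘ P := (mutuallySingular_of_disjoint (disjoint_sub_inf ν ν')).mono_ac hPρ hPρ'
  exact IsProbabilityMeasure.ne_zero P ((MutuallySingular.self_iff P).1 hPP)

end KozlovPartThree
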